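/- The kinetic dissipation operator does not have a unique invariant state: (i) with N = Σ_k n_k, D_kin commutes with the number dynamics, i.e. exp(itN) D_kin(A) exp(−itN) = D_kin( exp(itN) A exp(−itN) ) for all A ∈ M and t ∈ ℝ; (ii) for every μ′ ∈ ℝ, the Gibbs state ρ_{μ′}(A) = Tr(exp(−βF_{μ′}) A)/Tr(exp(−βF_{μ′})), where F_{μ′} = Σ_k (ε_k − μ′) n_k, satisfies ρ_{μ′}(D_kin(A)) = 0 for all A ∈ M; (iii) if the map μ′ ↦ 1/(1+e^{β(ε_0−μ′)}) is non-constant (which holds since β > 0), distinct values of μ′ give distinct D_kin-invariant states. -/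

import Mathlib

/-!
Work in the occupation basis `Fin n → Fin 2`, where bit `0` means "occupied" (so
`n_k = diag [w k = 0]`). There `a_k` is a signed partial permutation: its only entries are
`±1` at `(update w k 1, w)` with `w k = 0`. Hence `N`, `F_μ` and `exp (-βF_μ)` are diagonal,
`a_k D a_kᴴ` and `a_kᴴ D a_k` are diagonal for diagonal `D`, and every hop `a_yᴴ a_x` preserves
the particle number, so it commutes with every function of `N`; this gives (i).

For (ii), the trace pairing moves each Lindblad term onto the Gibbs density, where it becomes
the diagonal "outflow minus inflow" of the hop `x → y`. Since the rates satisfy detailed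
balance, `Γ_{x→y} e^{-βε_x} = Γ_{y→x} e^{-βε_y}`, the outflow of a configuration equals its
inflow once `x` and `y` are exchanged.

For (iii), evaluating `ρ_μ` on the projections onto the empty configuration and onto the one
with only site `0` occupied gives weights `1` and `e^{-β(ε_0-μ)}` over the same partition
function, which determines `μ` as `β ≠ 0`.
-/

open Matrix

noncomputable section JW

/-- The operator algebra of `n` fermionic sites: `2^n × 2^n` complex matrices, with the
index set realized as `Fin n → Fin 2` (the tensor-product basis). -/
abbrev FermionAlg (n : ℕ) := Matrix (Fin n → Fin 2) (Fin n → Fin 2) ℂ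

/-- Jordan–Wigner annihilation operator at site `k`:
`a_k = σ₃^{⊗ k} ⊗ σ⁻ ⊗ 1₂^{⊗ (n−k−1)}`, with `σ⁻ = [[0,0],[1,0]]` and
`σ₃ = [[1,0],[0,−1]]`, written entrywise in the tensor-product basis
(the entry of a tensor product at `(v, w)` is the product of the entries of the factors). -/
def jwA (n : ℕ) (k : Fin n) : FermionAlg n :=
  Matrix.of fun v w => ∏ j : Fin n,
    if j < k then (if v j = w j then (-1 : ℂ) ^ (v j : ℕ) else 0)
    else if j = k then (if v j = 1 ∧ w j = 0 then 1 else 0)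
    else (if v j = w j then 1 else 0)

/-- The number operator `n_k = a_kᴴ a_k`. -/
def numOp (n : ℕ) (k : Fin n) : FermionAlg n := (jwA n k)ᴴ * jwA n k

/-- The grading unitary `G = ∏_k (1 − 2 n_k)`. -/
def grading (n : ℕ) : FermionAlg n :=
  (List.ofFn fun k : Fin n => (1 - 2 • numOp n k)).prod

/-- The free energy `F = Σ_k (ε_k − μ) n_k`. -/
def freeEnergy (n : ℕ) (ε : Fin n → ℝ) (μ : ℝ) : FermionAlg n :=
  ∑ k, ((ε k - μ : ℝ) : ℂ) • numOp n k

/-- The Gibbs state `ρ(A) = Tr(exp(−βF)·A)/Tr(exp(−βF))`. -/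
def gibbs (n : ℕ) (ε : Fin n → ℝ) (μ β : ℝ) (A : FermionAlg n) : ℂ :=
  ((NormedSpace.exp ((-(β : ℂ)) • freeEnergy n ε μ)) * A).trace /
    (NormedSpace.exp ((-(β : ℂ)) • freeEnergy n ε μ)).trace

end JW

noncomputable section

/-- Mott's jump rate `Γ_{x→y} = Γ₀ (e^{−|x−y|/r}/Z) e^{−β(ε_y−ε_x)⁺}`. -/
def jumpRate (n : ℕ) (Γ₀ r Z β : ℝ) (ε : Fin n → ℝ) (x y : Fin n) : ℝ :=
  Γ₀ * (Real.exp (-(((|(x : ℤ) - (y : ℤ)| : ℤ) : ℝ)) / r) / Z) *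
    Real.exp (-(β * max (ε y - ε x) 0))

/-- The kinetic jump operator `L_{x→y} = √Γ_{x→y} · a_yᴴ a_x`. -/
def jumpOp (n : ℕ) (Γ₀ r Z β : ℝ) (ε : Fin n → ℝ) (x y : Fin n) : FermionAlg n :=
  ((Real.sqrt (jumpRate n Γ₀ r Z β ε x y) : ℝ) : ℂ) • ((jwA n y)ᴴ * jwA n x)

/-- The kinetic dissipation operator
`D_kin(A) = Σ_{x≠y} ( ½(L_{x→y}ᴴ L_{x→y} A + A L_{x→y}ᴴ L_{x→y}) − L_{x→y}ᴴ A L_{x→y} )`. -/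
def Dkin (n : ℕ) (Γ₀ r Z β : ℝ) (ε : Fin n → ℝ) (A : FermionAlg n) : FermionAlg n :=
  ∑ x : Fin n, ∑ y : Fin n,
    if x = y then 0 else
      ((1 / 2 : ℂ) • ((jumpOp n Γ₀ r Z β ε x y)ᴴ * jumpOp n Γ₀ r Z β ε x y * A
          + A * ((jumpOp n Γ₀ r Z β ε x y)ᴴ * jumpOp n Γ₀ r Z β ε x y))
        - (jumpOp n Γ₀ r Z β ε x y)ᴴ * A * jumpOp n Γ₀ r Z β ε x y)

open Finset Function

section Lindblad

variable {m 𝕜 : Type*} [Fintype m] [DecidableEq m]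

theorem Matrix.commute_diagonal_of_apply_ne_zero [CommSemiring 𝕜] {f : m → 𝕜}
    {M : Matrix m m 𝕜} (h : ∀ i j, M i j ≠ 0 → f i = f j) : Commute (diagonal f) M := by
  ext i j
  rw [diagonal_mul, mul_diagonal]
  by_cases hM : M i j = 0
  · simp [hM]
  · rw [h i j hM, mul_comm]

theorem Matrix.exp_smul_diagonal (z : ℂ) (f : m → ℂ) :
    NormedSpace.exp (z • diagonal f) = diagonal fun i => Complex.exp (z * f i) := by
  rw [← diagonal_smul, exp_diagonal, Complex.exp_eq_exp_ℂ]
  congr 1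
  ext i
  rw [Pi.coe_exp, Pi.smul_apply, smul_eq_mul]

variable [Field 𝕜] [StarRing 𝕜]

def lindbladTerm (L A : Matrix m m 𝕜) : Matrix m m 𝕜 :=
  (1 / 2 : 𝕜) • (Lᴴ * L * A + A * (Lᴴ * L)) - Lᴴ * A * L

def lindbladDual (L G : Matrix m m 𝕜) : Matrix m m 𝕜 :=
  (1 / 2 : 𝕜) • (G * (Lᴴ * L) + Lᴴ * L * G) - L * G * Lᴴ

theorem mul_lindbladTerm_mul_of_commute {L U V : Matrix m m 𝕜} (hU : Commute U L)
    (hU' : Commute U Lᴴ) (hV : Commute V L) (hV' : Commute V Lᴴ) (A : Matrix m m 𝕜) :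
    U * lindbladTerm L A * V = lindbladTerm L (U * A * V) := by
  have hUK : Commute U (Lᴴ * L) := hU'.mul_right hU
  have hVK : Commute V (Lᴴ * L) := hV'.mul_right hV
  simp only [lindbladTerm, mul_sub, sub_mul, mul_add, add_mul, mul_smul_comm, smul_mul_assoc,
    ← mul_assoc, hUK.eq, hU'.eq]
  simp only [mul_assoc, hVK.eq, hV.eq]

theorem trace_mul_lindbladTerm (L G A : Matrix m m 𝕜) :
    trace (G * lindbladTerm L A) = trace (lindbladDual L G * A) := by
  simp only [lindbladTerm, lindbladDual, mul_sub, sub_mul, mul_add, add_mul, mul_smul_comm,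
    smul_mul_assoc, trace_sub, trace_add, trace_smul]
  rw [← mul_assoc G A, trace_mul_comm (G * A), ← mul_assoc, trace_mul_comm G,
    mul_assoc (Lᴴ * A), trace_mul_comm (Lᴴ * A)]
  simp only [mul_assoc]

theorem lindbladDual_smul (c : 𝕜) (L G : Matrix m m 𝕜) :
    lindbladDual (c • L) G = (star c * c) • lindbladDual L G := by
  simp only [lindbladDual, conjTranspose_smul, smul_mul_assoc, mul_smul_comm, smul_smul,
    smul_sub, smul_add]
  module

theorem lindbladDual_diagonal [NeZero (2 : 𝕜)] {L : Matrix m m 𝕜} {k : m → 𝕜}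
    (hL : Lᴴ * L = diagonal k) (e : m → 𝕜) :
    lindbladDual L (diagonal e) = diagonal (k * e) - L * diagonal e * Lᴴ := by
  rw [lindbladDual, hL, diagonal_mul_diagonal, diagonal_mul_diagonal]
  simp only [mul_comm (e _), ← two_smul 𝕜, smul_smul]
  rw [one_div, inv_mul_cancel₀ two_ne_zero, one_smul]
  rfl

end Lindblad

theorem Function.and_eq_update_comm {ι α : Type*} [DecidableEq ι] {u v : ι → α} {k : ι}
    {a b : α} :
    (u k = a ∧ v = update u k b) ↔ (v k = b ∧ u = update v k a) := by
  simp only [eq_update_iff]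
  exact ⟨fun ⟨ha, hb, h⟩ => ⟨hb, ha, fun j hj => (h j hj).symm⟩,
    fun ⟨hb, ha, h⟩ => ⟨ha, hb, fun j hj => (h j hj).symm⟩⟩

section JordanWigner

variable {n : ℕ}

def jwSign (k : Fin n) (w : Fin n → Fin 2) : ℤ :=
  ∏ j, if j < k then (-1) ^ (w j : ℕ) else 1

theorem jwSign_mul_self (k : Fin n) (w : Fin n → Fin 2) :
    (jwSign k w : ℂ) * jwSign k w = 1 := by
  norm_cast
  rw [jwSign, ← prod_mul_distrib]
  refine prod_eq_one fun j _ => ?_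
  split_ifs <;> simp [← mul_pow]

theorem jwA_apply (k : Fin n) (v w : Fin n → Fin 2) :
    jwA n k v w = if w k = 0 ∧ v = update w k 1 then (jwSign k w : ℂ) else 0 := by
  rw [jwA, of_apply]
  split_ifs with h
  · obtain ⟨hw, rfl⟩ := h
    rw [jwSign, Int.cast_prod]
    refine prod_congr rfl fun j _ => ?_
    rcases lt_trichotomy j k with hjk | rfl | hkj
    · simp [hjk, hjk.ne]
    · simp [hw]
    · simp [hkj.not_gt, hkj.ne']
  · rw [eq_update_iff] at h
    push Not at h
    by_cases hk : v k = 1 ∧ w k = 0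
    · obtain ⟨j, hjk, hj⟩ := h hk.2 hk.1
      refine prod_eq_zero (mem_univ j) ?_
      rcases hjk.lt_or_gt with hlt | hgt
      · simp [hlt, hj]
      · simp [hgt.not_gt, hjk, hj]
    · exact prod_eq_zero (mem_univ k) (by simp [hk])

theorem jwA_apply' (k : Fin n) (v w : Fin n → Fin 2) :
    jwA n k v w = if v k = 1 ∧ w = update v k 0 then (jwSign k w : ℂ) else 0 := by
  rw [jwA_apply]
  exact if_congr and_eq_update_comm rfl rfl

theorem jwA_mul_diagonal_mul_conjTranspose (k : Fin n) (g : (Fin n → Fin 2) → ℂ) :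
    jwA n k * diagonal g * (jwA n k)ᴴ =
      diagonal fun v => if v k = 1 then g (update v k 0) else 0 := by
  ext v v'
  rw [mul_apply]
  simp only [mul_diagonal, conjTranspose_apply, jwA_apply' k v, jwA_apply k v', diagonal_apply]
  by_cases hv : v k = 1
  · rw [sum_eq_single (update v k 0) (fun x _ hx => by simp [hx]) (by simp)]
    by_cases hvv : v = v'
    · subst hvv
      simp [hv]
      linear_combination g (update v k 0) * jwSign_mul_self k (update v k 0)
    · have : update v k 1 = v := by rw [update_eq_self_iff, hv]
      simp [hv, this, hvv, Ne.symm hvv]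
  · simp [hv]

theorem conjTranspose_jwA_mul_diagonal_mul (k : Fin n) (h : (Fin n → Fin 2) → ℂ) :
    (jwA n k)ᴴ * diagonal h * jwA n k =
      diagonal fun w => if w k = 0 then h (update w k 1) else 0 := by
  ext w w'
  rw [mul_apply]
  simp only [mul_diagonal, conjTranspose_apply, jwA_apply k _ w, jwA_apply' k _ w',
    diagonal_apply]
  by_cases hw : w k = 0
  · rw [sum_eq_single (update w k 1) (fun x _ hx => by simp [hx]) (by simp)]
    by_cases hww : w = w'
    · subst hww
      simp [hw]
      linear_combination h (update w k 1) * jwSign_mul_self k w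
    · have : update w k 0 = w := by rw [update_eq_self_iff, hw]
      simp [hw, this, hww, Ne.symm hww]
  · simp [hw]

theorem numOp_eq_diagonal (k : Fin n) :
    numOp n k = diagonal fun w => if w k = 0 then 1 else 0 := by
  rw [numOp]
  simpa using conjTranspose_jwA_mul_diagonal_mul k 1

theorem hop_conjTranspose_mul_self {x y : Fin n} (hxy : x ≠ y) :
    ((jwA n y)ᴴ * jwA n x)ᴴ * ((jwA n y)ᴴ * jwA n x) =
      diagonal fun w => if w x = 0 ∧ w y = 1 then 1 else 0 := by
  calc ((jwA n y)ᴴ * jwA n x)ᴴ * ((jwA n y)ᴴ * jwA n x)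
      = (jwA n x)ᴴ * (jwA n y * diagonal (fun _ => 1) * (jwA n y)ᴴ) * jwA n x := by
        simp only [conjTranspose_mul, conjTranspose_conjTranspose, diagonal_one, mul_one,
          mul_assoc]
    _ = _ := by
        rw [jwA_mul_diagonal_mul_conjTranspose, conjTranspose_jwA_mul_diagonal_mul]
        simp [update_of_ne hxy.symm, ite_and]

theorem hop_mul_diagonal_mul_conjTranspose {x y : Fin n} (hxy : x ≠ y)
    (g : (Fin n → Fin 2) → ℂ) :
    (jwA n y)ᴴ * jwA n x * diagonal g * ((jwA n y)ᴴ * jwA n x)ᴴ =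
      diagonal fun w => if w y = 0 ∧ w x = 1 then g (update (update w y 1) x 0) else 0 := by
  calc (jwA n y)ᴴ * jwA n x * diagonal g * ((jwA n y)ᴴ * jwA n x)ᴴ
      = (jwA n y)ᴴ * (jwA n x * diagonal g * (jwA n x)ᴴ) * jwA n y := by
        simp only [conjTranspose_mul, conjTranspose_conjTranspose, mul_assoc]
    _ = _ := by
        rw [jwA_mul_diagonal_mul_conjTranspose, conjTranspose_jwA_mul_diagonal_mul]
        simp [update_of_ne hxy, ite_and]

end JordanWigner

section Occupation

variable {n : ℕ}

def configEnergy (c : Fin n → ℝ) (v : Fin n → Fin 2) : ℝ :=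
  ∑ k, if v k = 0 then c k else 0

theorem configEnergy_update (c : Fin n → ℝ) (u : Fin n → Fin 2) (k : Fin n) (b : Fin 2) :
    configEnergy c (update u k b) =
      configEnergy c u - (if u k = 0 then c k else 0) + (if b = 0 then c k else 0) := by
  simp only [configEnergy, ← sum_erase_add _ _ (mem_univ k), update_self]
  rw [sum_congr rfl fun j hj => by rw [update_of_ne (ne_of_mem_erase hj)]]
  ring

theorem configEnergy_eq_of_jwA_apply_ne_zero (c : Fin n → ℝ) {k : Fin n} {v w : Fin n → Fin 2}
    (h : jwA n k v w ≠ 0) : configEnergy c w = configEnergy c v + c k := by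
  rw [jwA_apply] at h
  obtain ⟨⟨hw, rfl⟩, -⟩ := ite_ne_right_iff.mp h
  simp [configEnergy_update, hw]

theorem configEnergy_add_eq_of_hop_apply_ne_zero (c : Fin n → ℝ) {x y : Fin n}
    {i j : Fin n → Fin 2} (h : ((jwA n y)ᴴ * jwA n x) i j ≠ 0) :
    configEnergy c i + c x = configEnergy c j + c y := by
  obtain ⟨v, -, hv⟩ := exists_ne_zero_of_sum_ne_zero h
  simp only [conjTranspose_apply] at hv
  have hi := configEnergy_eq_of_jwA_apply_ne_zero c (star_ne_zero.mp (left_ne_zero_of_mul hv))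
  have hj := configEnergy_eq_of_jwA_apply_ne_zero c (right_ne_zero_of_mul hv)
  linarith

theorem sum_smul_numOp (c : Fin n → ℝ) :
    ∑ k, (c k : ℂ) • numOp n k = diagonal fun v => (configEnergy c v : ℂ) := by
  ext v w
  by_cases hvw : v = w
  · subst hvw
    simp [Matrix.sum_apply, numOp_eq_diagonal, configEnergy, apply_ite Complex.ofReal]
  · simp [Matrix.sum_apply, numOp_eq_diagonal, hvw]

def particleNumber (v : Fin n → Fin 2) : ℝ := configEnergy 1 v

theorem sum_numOp : ∑ k, numOp n k = diagonal fun v => (particleNumber v : ℂ) := by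
  simpa [particleNumber] using sum_smul_numOp (n := n) 1

def boltzmannWeight (ε : Fin n → ℝ) (μ β : ℝ) (v : Fin n → Fin 2) : ℝ :=
  Real.exp (-β * configEnergy (fun k => ε k - μ) v)

end Occupation

def DkinDual (n : ℕ) (Γ₀ r Z β : ℝ) (ε : Fin n → ℝ) (G : FermionAlg n) : FermionAlg n :=
  ∑ x : Fin n, ∑ y : Fin n, if x = y then 0 else lindbladDual (jumpOp n Γ₀ r Z β ε x y) G

section Kinetic

variable {n : ℕ} {Γ₀ r Z β : ℝ} {ε : Fin n → ℝ}

theorem particleNumber_eq_of_jumpOp_apply_ne_zero {x y : Fin n} {i j : Fin n → Fin 2}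
    (h : jumpOp n Γ₀ r Z β ε x y i j ≠ 0) : particleNumber i = particleNumber j := by
  simpa [particleNumber] using
    configEnergy_add_eq_of_hop_apply_ne_zero 1 (right_ne_zero_of_mul h)

theorem Dkin_eq_sum_lindbladTerm (A : FermionAlg n) :
    Dkin n Γ₀ r Z β ε A =
      ∑ x, ∑ y, if x = y then 0 else lindbladTerm (jumpOp n Γ₀ r Z β ε x y) A := rfl

theorem diagonal_mul_Dkin_mul_diagonal (g h : ℝ → ℂ) (A : FermionAlg n) :
    diagonal (fun v => g (particleNumber v)) * Dkin n Γ₀ r Z β ε A *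
        diagonal (fun v => h (particleNumber v)) =
      Dkin n Γ₀ r Z β ε
        (diagonal (fun v => g (particleNumber v)) * A *
          diagonal (fun v => h (particleNumber v))) := by
  have hL (g : ℝ → ℂ) (x y : Fin n) :
      Commute (diagonal fun v => g (particleNumber v)) (jumpOp n Γ₀ r Z β ε x y) :=
    commute_diagonal_of_apply_ne_zero fun i j hij =>
      congrArg g (particleNumber_eq_of_jumpOp_apply_ne_zero hij)
  have hL' (g : ℝ → ℂ) (x y : Fin n) :
      Commute (diagonal fun v => g (particleNumber v)) (jumpOp n Γ₀ r Z β ε x y)ᴴ :=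
    commute_diagonal_of_apply_ne_zero fun i j hij =>
      congrArg g (particleNumber_eq_of_jumpOp_apply_ne_zero (star_ne_zero.mp hij)).symm
  simp only [Dkin_eq_sum_lindbladTerm, mul_sum, sum_mul]
  refine sum_congr rfl fun x _ => sum_congr rfl fun y _ => ?_
  split_ifs
  · simp
  · exact mul_lindbladTerm_mul_of_commute (hL g x y) (hL' g x y) (hL h x y) (hL' h x y) A

theorem jumpRate_nonneg (hΓ₀ : 0 ≤ Γ₀) (hZ : 0 ≤ Z) (x y : Fin n) :
    0 ≤ jumpRate n Γ₀ r Z β ε x y := by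
  unfold jumpRate
  positivity

theorem jumpRate_mul_exp_neg_comm (x y : Fin n) :
    jumpRate n Γ₀ r Z β ε x y * Real.exp (-(β * ε x)) =
      jumpRate n Γ₀ r Z β ε y x * Real.exp (-(β * ε y)) := by
  have hmax : max (ε y - ε x) 0 + ε x = max (ε x - ε y) 0 + ε y := by
    rcases le_total (ε x) (ε y) with h | h
    · rw [max_eq_left (by linarith), max_eq_right (by linarith)]; ring
    · rw [max_eq_right (by linarith), max_eq_left (by linarith)]; ring
  have hexp : Real.exp (-(β * max (ε y - ε x) 0)) * Real.exp (-(β * ε x)) =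
      Real.exp (-(β * max (ε x - ε y) 0)) * Real.exp (-(β * ε y)) := by
    rw [← Real.exp_add, ← Real.exp_add]
    congr 1
    linear_combination -β * hmax
  rw [jumpRate, jumpRate, abs_sub_comm]
  linear_combination Γ₀ * (Real.exp (-(|(y : ℤ) - x| : ℤ) / r) / Z) * hexp

theorem jumpRate_mul_boltzmannWeight_hop (μ : ℝ) {x y : Fin n} {u : Fin n → Fin 2}
    (hx : u x = 0) (hy : u y = 1) :
    jumpRate n Γ₀ r Z β ε y x * boltzmannWeight ε μ β (update (update u x 1) y 0) =
      jumpRate n Γ₀ r Z β ε x y * boltzmannWeight ε μ β u := by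
  have hxy : y ≠ x := fun h => by simp [h, hx] at hy
  have hE : configEnergy (fun k => ε k - μ) (update (update u x 1) y 0) =
      configEnergy (fun k => ε k - μ) u - (ε x - μ) + (ε y - μ) := by
    simp [configEnergy_update, update_of_ne hxy, hx, hy]
  calc jumpRate n Γ₀ r Z β ε y x * boltzmannWeight ε μ β (update (update u x 1) y 0)
      = jumpRate n Γ₀ r Z β ε y x * Real.exp (-(β * ε y)) * Real.exp (β * ε x) *
          boltzmannWeight ε μ β u := by
        rw [boltzmannWeight, boltzmannWeight, hE, mul_assoc, mul_assoc, ← Real.exp_add,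
          ← Real.exp_add]
        congr 2
        ring
    _ = jumpRate n Γ₀ r Z β ε x y * boltzmannWeight ε μ β u := by
        rw [← jumpRate_mul_exp_neg_comm, mul_assoc (jumpRate n Γ₀ r Z β ε x y), ← Real.exp_add,
          neg_add_cancel, Real.exp_zero, mul_one]

theorem sum_jumpRate_outflow_eq_sum_inflow (μ : ℝ) (u : Fin n → Fin 2) :
    ∑ x, ∑ y, jumpRate n Γ₀ r Z β ε x y *
        (if u x = 0 ∧ u y = 1 then boltzmannWeight ε μ β u else 0) =
      ∑ x, ∑ y, jumpRate n Γ₀ r Z β ε x y *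
        (if u y = 0 ∧ u x = 1 then boltzmannWeight ε μ β (update (update u y 1) x 0) else 0) := by
  rw [sum_comm (f := fun x y => jumpRate n Γ₀ r Z β ε x y * _)]
  refine sum_congr rfl fun x _ => sum_congr rfl fun y _ => ?_
  split_ifs with h
  · exact (jumpRate_mul_boltzmannWeight_hop μ h.1 h.2).symm
  · simp

theorem exp_neg_smul_freeEnergy (μ : ℝ) :
    NormedSpace.exp ((-(β : ℂ)) • freeEnergy n ε μ) =
      diagonal fun v => (boltzmannWeight ε μ β v : ℂ) := by
  rw [freeEnergy, sum_smul_numOp, exp_smul_diagonal]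
  congr 1
  ext v
  push_cast [boltzmannWeight]
  ring_nf

theorem gibbs_apply (μ : ℝ) (A : FermionAlg n) :
    gibbs n ε μ β A =
      (∑ v, (boltzmannWeight ε μ β v : ℂ) * A v v) / ∑ v, (boltzmannWeight ε μ β v : ℂ) := by
  rw [gibbs, exp_neg_smul_freeEnergy]
  simp [trace, diagonal_mul]

theorem lindbladDual_jumpOp_diagonal (hΓ₀ : 0 ≤ Γ₀) (hZ : 0 ≤ Z) {x y : Fin n} (hxy : x ≠ y)
    (e : (Fin n → Fin 2) → ℂ) :
    lindbladDual (jumpOp n Γ₀ r Z β ε x y) (diagonal e) =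
      diagonal fun u => (jumpRate n Γ₀ r Z β ε x y : ℂ) *
        ((if u x = 0 ∧ u y = 1 then e u else 0) -
          (if u y = 0 ∧ u x = 1 then e (update (update u y 1) x 0) else 0)) := by
  have hrate : star ((√(jumpRate n Γ₀ r Z β ε x y) : ℝ) : ℂ) * (√(jumpRate n Γ₀ r Z β ε x y) : ℝ)
      = jumpRate n Γ₀ r Z β ε x y := by
    rw [Complex.star_def, Complex.conj_ofReal, ← Complex.ofReal_mul,
      Real.mul_self_sqrt (jumpRate_nonneg hΓ₀ hZ x y)]
  rw [jumpOp, lindbladDual_smul, hrate, lindbladDual_diagonal (hop_conjTranspose_mul_self hxy),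
    hop_mul_diagonal_mul_conjTranspose hxy, diagonal_sub, ← diagonal_smul]
  congr 1
  ext u
  simp [ite_and]

theorem trace_mul_Dkin (G A : FermionAlg n) :
    trace (G * Dkin n Γ₀ r Z β ε A) = trace (DkinDual n Γ₀ r Z β ε G * A) := by
  simp only [Dkin_eq_sum_lindbladTerm, DkinDual, mul_sum, sum_mul, trace_sum]
  refine sum_congr rfl fun x _ => sum_congr rfl fun y _ => ?_
  split_ifs
  · simp
  · exact trace_mul_lindbladTerm _ _ _

theorem DkinDual_diagonal_boltzmannWeight (hΓ₀ : 0 ≤ Γ₀) (hZ : 0 ≤ Z) (μ : ℝ) :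
    DkinDual n Γ₀ r Z β ε (diagonal fun v => (boltzmannWeight ε μ β v : ℂ)) = 0 := by
  set e : (Fin n → Fin 2) → ℂ := fun v => (boltzmannWeight ε μ β v : ℂ)
  have hterm (x y : Fin n) :
      (if x = y then 0 else lindbladDual (jumpOp n Γ₀ r Z β ε x y) (diagonal e)) =
        diagonal fun u => (jumpRate n Γ₀ r Z β ε x y : ℂ) *
          ((if u x = 0 ∧ u y = 1 then e u else 0) -
            (if u y = 0 ∧ u x = 1 then e (update (update u y 1) x 0) else 0)) := by
    split_ifs with hxy
    · subst hxy
      have hbit : ∀ b : Fin 2, ¬(b = 0 ∧ b = 1) := by decide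
      simp [hbit]
    · exact lindbladDual_jumpOp_diagonal hΓ₀ hZ hxy e
  ext u v
  simp only [DkinDual, hterm, Matrix.sum_apply, diagonal_apply, Matrix.zero_apply]
  split_ifs with huv
  · simp only [mul_sub, sum_sub_distrib, sub_eq_zero, e]
    have h := congrArg ((↑) : ℝ → ℂ) (sum_jumpRate_outflow_eq_sum_inflow
      (Γ₀ := Γ₀) (r := r) (Z := Z) (β := β) (ε := ε) μ u)
    push_cast [apply_ite ((↑) : ℝ → ℂ)] at h
    exact h
  · simp

theorem gibbs_Dkin_eq_zero (hΓ₀ : 0 ≤ Γ₀) (hZ : 0 ≤ Z) (μ : ℝ) (A : FermionAlg n) :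
    gibbs n ε μ β (Dkin n Γ₀ r Z β ε A) = 0 := by
  rw [gibbs, trace_mul_Dkin, exp_neg_smul_freeEnergy, DkinDual_diagonal_boltzmannWeight hΓ₀ hZ,
    zero_mul, trace_zero, zero_div]

theorem gibbs_single (μ : ℝ) (v : Fin n → Fin 2) :
    gibbs n ε μ β (single v v 1) =
      (boltzmannWeight ε μ β v : ℂ) / ∑ w, (boltzmannWeight ε μ β w : ℂ) := by
  rw [gibbs_apply]
  simp [single_apply]

theorem boltzmannWeight_empty (μ : ℝ) : boltzmannWeight ε μ β (fun _ => 1) = 1 := by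
  simp [boltzmannWeight, configEnergy]

theorem boltzmannWeight_update_empty (μ : ℝ) (k : Fin n) :
    boltzmannWeight ε μ β (update (fun _ => 1) k 0) = Real.exp (-β * (ε k - μ)) := by
  rw [boltzmannWeight, configEnergy_update]
  simp [configEnergy]

theorem gibbs_injective (hn : 0 < n) (hβ : β ≠ 0) : Injective fun μ => gibbs n ε μ β := by
  intro μ₁ μ₂ h
  have hS (μ : ℝ) : ∑ w, (boltzmannWeight ε μ β w : ℂ) ≠ 0 := by
    exact_mod_cast (sum_pos (fun w _ => Real.exp_pos _) univ_nonempty).ne'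
  set v : Fin n → Fin 2 := update (fun _ => 1) ⟨0, hn⟩ 0
  have h₀ := congrFun h (single (fun _ => 1) (fun _ => 1) 1)
  have h₁ := congrFun h (single v v 1)
  simp only [gibbs_single, boltzmannWeight_empty, Complex.ofReal_one, one_div] at h₀ h₁
  rw [inv_injective h₀, div_left_inj' (hS μ₂), boltzmannWeight_update_empty,
    boltzmannWeight_update_empty, Complex.ofReal_inj, Real.exp_eq_exp] at h₁
  have := mul_left_cancel₀ (neg_ne_zero.mpr hβ) h₁
  linarith

end Kinetic

theorem kinetic_dissipator_no_unique_invariant_state_general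
    (n : ℕ) (hn : 1 ≤ n) (β Γ₀ r Z : ℝ) (hβ : 0 < β) (hΓ₀ : 0 < Γ₀)
    (hZ : 0 < Z) (ε : Fin n → ℝ) :
    (∀ A : FermionAlg n, ∀ t : ℝ,
      NormedSpace.exp ((Complex.I * t) • (∑ k : Fin n, numOp n k)) *
          Dkin n Γ₀ r Z β ε A *
          NormedSpace.exp ((-(Complex.I * t)) • (∑ k : Fin n, numOp n k))
      = Dkin n Γ₀ r Z β ε
          (NormedSpace.exp ((Complex.I * t) • (∑ k : Fin n, numOp n k)) * A *
            NormedSpace.exp ((-(Complex.I * t)) • (∑ k : Fin n, numOp n k)))) ∧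
    (∀ μ' : ℝ, ∀ A : FermionAlg n, gibbs n ε μ' β (Dkin n Γ₀ r Z β ε A) = 0) ∧
    (∀ μ₁ μ₂ : ℝ, μ₁ ≠ μ₂ → gibbs n ε μ₁ β ≠ gibbs n ε μ₂ β) := by
  refine ⟨fun A t => ?_, gibbs_Dkin_eq_zero hΓ₀.le hZ.le,
    fun μ₁ μ₂ => (gibbs_injective hn hβ.ne').ne⟩
  simp only [sum_numOp, exp_smul_diagonal]
  exact diagonal_mul_Dkin_mul_diagonal (fun s => Complex.exp (Complex.I * t * s))
    (fun s => Complex.exp (-(Complex.I * t) * s)) A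

/-- The kinetic dissipation operator does not have a unique invariant
state: (i) with `N = Σ_k n_k`, `D_kin` commutes with the number dynamics; (ii) for every
`μ′`, the Gibbs state `ρ_{μ′}` built from `F_{μ′} = Σ_k (ε_k − μ′) n_k` is `D_kin`-invariant;
(iii) distinct values of `μ′` give distinct such `D_kin`-invariant states (the map
`μ′ ↦ 1/(1+e^{β(ε_0−μ′)})` being non-constant, since `β > 0`). -/
theorem kinetic_dissipator_no_unique_invariant_state
    (n : ℕ) (hn : 1 ≤ n) (β Γ₀ r Z : ℝ) (hβ : 0 < β) (hΓ₀ : 0 < Γ₀) (hr : 0 < r)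
    (hZ : 0 < Z) (ε : Fin n → ℝ) :
    (∀ A : FermionAlg n, ∀ t : ℝ,
      NormedSpace.exp ((Complex.I * t) • (∑ k : Fin n, numOp n k)) *
          Dkin n Γ₀ r Z β ε A *
          NormedSpace.exp ((-(Complex.I * t)) • (∑ k : Fin n, numOp n k))
      = Dkin n Γ₀ r Z β ε
          (NormedSpace.exp ((Complex.I * t) • (∑ k : Fin n, numOp n k)) * A *
            NormedSpace.exp ((-(Complex.I * t)) • (∑ k : Fin n, numOp n k)))) ∧
    (∀ μ' : ℝ, ∀ A : FermionAlg n, gibbs n ε μ' β (Dkin n Γ₀ r Z β ε A) = 0) ∧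
    (∀ μ₁ μ₂ : ℝ, μ₁ ≠ μ₂ → gibbs n ε μ₁ β ≠ gibbs n ε μ₂ β) :=
  kinetic_dissipator_no_unique_invariant_state_general n hn β Γ₀ r Z hβ hΓ₀ hZ ε
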